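/- Each invariant vector field ξ_i is invariant under every transformation τ_z: for all z ∈ ℝ⁴, all x ∈ ℝ⁴, and all i, j ∈ {1,2,3,4}, ξ_i^j(τ_z(x)) = Σ_k (∂τ_z^j/∂x^k)(x) · ξ_i^k(x). -/

import Mathlib

/-- Partial derivative `∂f/∂xⁱ` of a real-valued function on `ℝ⁴`. -/
noncomputable def pd (i : Fin 4) (f : (Fin 4 → ℝ) → ℝ) (x : Fin 4 → ℝ) : ℝ :=
  fderiv ℝ f x (Pi.single i 1)
/-- The transformation `τ_z : ℝ⁴ → ℝ⁴` (indices `0,…,3` for coordinates `1,…,4`). -/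
noncomputable def τ (k : ℝ) (z x : Fin 4 → ℝ) : Fin 4 → ℝ :=
  ![x 0 - z 0 + 2 * z 3 - k * Real.exp (k * z 3 / 2) * z 2 * x 3,
    x 1 - z 3,
    x 2 * Real.exp (-(k * z 3) / 2) - z 2,
    x 3 * Real.exp (k * z 3 / 2) - z 1]
/-- The invariant vector fields `ξ₁,…,ξ₄` (indices `0,…,3`). -/
noncomputable def ξ (k : ℝ) (i : Fin 4) (x : Fin 4 → ℝ) : Fin 4 → ℝ :=
  ![![-1, 0, 0, 0],
    ![-k * x 2 * Real.exp (-(k * x 1) / 2), 0, 0, -Real.exp (-(k * x 1) / 2)],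
    ![0, 0, -Real.exp (k * x 1 / 2), 0],
    ![2, -1, 0, 0]] i

/-! `τ_z` is affine in `x`, so its Jacobian is a constant matrix and the claim becomes the identity
`ξ_i(τ_z x) = (Dτ_z) ξ_i(x)` of explicit vectors. The only non-linear input is the behaviour
of the exponential factors under the shift `x² ↦ x² - z⁴`:
`e^{∓k(x² - z⁴)/2} = e^{±k z⁴/2} e^{∓k x²/2}`. -/

open Real Matrix

lemma pd_mulVec_add {m : Type*} [Fintype m] (A : Matrix m (Fin 4) ℝ) (b : m → ℝ) (j : m)
    (l : Fin 4) (x : Fin 4 → ℝ) : pd l (fun y => (A *ᵥ y + b) j) x = A j l := by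
  let L : (Fin 4 → ℝ) →L[ℝ] ℝ :=
    ContinuousLinearMap.proj j ∘L LinearMap.toContinuousLinearMap (Matrix.toLin' A)
  have hL : (fun y => (A *ᵥ y + b) j) = fun y => L y + b j := rfl
  rw [pd, hL, fderiv_add_const, ContinuousLinearMap.fderiv]
  simp [L]

noncomputable def τJac (k : ℝ) (z : Fin 4 → ℝ) : Matrix (Fin 4) (Fin 4) ℝ :=
  !![1, 0, 0, -(k * exp (k * z 3 / 2) * z 2);
     0, 1, 0, 0;
     0, 0, exp (-(k * z 3) / 2), 0;
     0, 0, 0, exp (k * z 3 / 2)]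

lemma τ_eq_τJac_mulVec_add (k : ℝ) (z y : Fin 4 → ℝ) :
    τ k z y = τJac k z *ᵥ y + τ k z 0 := by
  ext j
  fin_cases j <;> simp [τ, τJac, dotProduct, Fin.sum_univ_four] <;> ring

lemma pd_τ (k : ℝ) (z x : Fin 4 → ℝ) (j l : Fin 4) :
    pd l (fun y => τ k z y j) x = τJac k z j l := by
  have hτ : (fun y => τ k z y j) = fun y => (τJac k z *ᵥ y + τ k z 0) j :=
    funext fun y => by rw [← τ_eq_τJac_mulVec_add]
  rw [hτ, pd_mulVec_add]

lemma ξ_τ_eq_τJac_mulVec (k : ℝ) (z x : Fin 4 → ℝ) (i : Fin 4) :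
    ξ k i (τ k z x) = τJac k z *ᵥ ξ k i x := by
  have h₁ : exp (-(k * (x 1 - z 3)) / 2) = exp (k * z 3 / 2) * exp (-(k * x 1) / 2) := by
    rw [← exp_add]; ring_nf
  have h₂ : exp (k * (x 1 - z 3) / 2) = exp (-(k * z 3) / 2) * exp (k * x 1 / 2) := by
    rw [← exp_add]; ring_nf
  have h₃ : exp (k * z 3 / 2) * exp (-(k * z 3) / 2) = 1 := by
    rw [← exp_add]; ring_nf; exact exp_zero
  ext j
  fin_cases i <;> fin_cases j <;>
    simp [ξ, τ, τJac, Matrix.mulVec, dotProduct, Fin.sum_univ_four, h₁, h₂]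
  linear_combination -(k * x 2 * exp (-(k * x 1) / 2)) * h₃

theorem xi_invariant_general (k : ℝ) (z x : Fin 4 → ℝ) (i j : Fin 4) :
    ξ k i (τ k z x) j = ∑ l : Fin 4, pd l (fun y => τ k z y j) x * ξ k i x l := by
  simp_rw [pd_τ, ξ_τ_eq_τJac_mulVec]
  rfl

/-- Each invariant field `ξ_i` is invariant under every `τ_z`:
`ξ_i^j(τ_z x) = Σ_k (∂τ_z^j/∂x^k)(x) ξ_i^k(x)`. -/
theorem xi_invariant (k : ℝ) (hk : 0 < k) (z x : Fin 4 → ℝ) (i j : Fin 4) :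
    ξ k i (τ k z x) j = ∑ l : Fin 4, pd l (fun y => τ k z y j) x * ξ k i x l :=
  xi_invariant_general k z x i j
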